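/- arXiv:math/9407206 — 9 statements merged into one kernel-verified Lean document; each statement's English description precedes it below -/
import Mathlib

section
/- Let λ ≤ θ be infinite cardinals and suppose F = {f_β : β < θ} is an injectively indexed family of functions from λ to ω such that: (a) F is ≤⁺-unbounded; (b) for every G ⊆ θ with |G| < θ, the family {f_β : β ∈ G} is ≤⁺-bounded; and (c) for every E ⊆ λ with |E| < λ, the family of restrictions {f_β ↾ E : β < θ} is ≤⁺-bounded (as functions from E to ω). Then there is a (θ,λ)-good set. -/
open Cardinal Set

universe u

/-- `f ≤⁺ g`: there is `k` such that for every `α`, `f α ≤ g α` or `f α ≤ k`. -/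
def LePlus {I : Type u} (f g : I → ℕ) : Prop :=
  ∃ k : ℕ, ∀ α, f α ≤ g α ∨ f α ≤ k

/-- `f ≤* g`: `f α ≤ g α` for all but finitely many `α`. -/
def LeStar {I : Type u} (f g : I → ℕ) : Prop :=
  {α | ¬ f α ≤ g α}.Finite

/-- The trace `V_g × U_f` of a basic neighborhood of `(∞,∞)` in `F_θ × F_λ`. -/
def VU {Θ Λ : Type u} (g : Θ → ℕ) (f : Λ → ℕ) : Set ((Θ × ℕ) × (Λ × ℕ)) :=
  {p | g p.1.1 < p.1.2 ∧ f p.2.1 < p.2.2}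

/-- `A` is a `(θ,λ)`-good set, where `θ = #Θ` and `λ = #Λ`; clause (d) is
required only in case `λ = θ`. -/
def IsGood {Θ Λ : Type u} (A : Set ((Θ × ℕ) × (Λ × ℕ))) : Prop :=
  (∀ (g : Θ → ℕ) (f : Λ → ℕ), (A ∩ VU g f).Nonempty) ∧
  (∀ B ⊆ A, #B < #Θ → ∃ (g : Θ → ℕ) (f : Λ → ℕ), B ∩ VU g f = ∅) ∧
  (∀ E : Set Λ, #E < #Λ →
    ∃ (g : Θ → ℕ) (f : Λ → ℕ), A ∩ {p | p.2.1 ∈ E} ∩ VU g f = ∅) ∧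
  (#Λ = #Θ → ∀ F : Set Θ, #F < #Θ →
    ∃ (g : Θ → ℕ) (f : Λ → ℕ), A ∩ {p | p.1.1 ∈ F} ∩ VU g f = ∅)

/-- Lemma 1.3: a `≤⁺`-unbounded family of functions `λ → ω`, all of whose
small subfamilies are bounded and all of whose restrictions to small subsets
of `λ` are bounded, yields a `(θ,λ)`-good set. -/
theorem statement0 {Θ Λ : Type u} [Infinite Θ] [Infinite Λ] (hle : #Λ ≤ #Θ)
    (f : Θ → Λ → ℕ) (hinj : Function.Injective f)
    (ha : ¬ ∃ g : Λ → ℕ, ∀ β : Θ, LePlus (f β) g)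
    (hb : ∀ G : Set Θ, #G < #Θ → ∃ g : Λ → ℕ, ∀ β ∈ G, LePlus (f β) g)
    (hc : ∀ E : Set Λ, #E < #Λ →
      ∃ g : E → ℕ, ∀ β : Θ, LePlus (fun α : E => f β α) g) :
    ∃ A : Set ((Θ × ℕ) × (Λ × ℕ)), IsGood A := by

  classical
  refine ⟨{p | ∃ β α, p = ((β, f β α), (α, f β α))}, ?_, ?_, ?_, ?_⟩
  · -- (a)
    intro g h
    obtain ⟨β, hβ⟩ : ∃ β, ¬ LePlus (f β) h := by
      by_contra hcon; push_neg at hcon; exact ha ⟨h, hcon⟩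
    simp only [LePlus, not_exists, not_forall, not_or, not_le] at hβ
    obtain ⟨α, hα1, hα2⟩ := hβ (g β)
    exact ⟨((β, f β α), (α, f β α)), ⟨β, α, rfl⟩, hα2, hα1⟩
  · -- (b)
    intro B hBA hB
    have hGcard : #((fun p : (Θ × ℕ) × (Λ × ℕ) => p.1.1) '' B) < #Θ :=
      lt_of_le_of_lt Cardinal.mk_image_le hB
    obtain ⟨g₀, hg₀⟩ := hb _ hGcard
    choose k hk using hg₀
    refine ⟨fun β => if h : β ∈ (fun p : (Θ × ℕ) × (Λ × ℕ) => p.1.1) '' B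
      then k β h else 0, g₀, ?_⟩
    ext p
    simp only [mem_inter_iff, mem_empty_iff_false, iff_false, not_and]
    intro hpB hpV
    obtain ⟨β, α, rfl⟩ := hBA hpB
    have hβG : β ∈ (fun p : (Θ × ℕ) × (Λ × ℕ) => p.1.1) '' B := ⟨_, hpB, rfl⟩
    obtain ⟨hV1, hV2⟩ := hpV
    simp only [dif_pos hβG] at hV1
    rcases hk β hβG α with h | h
    · exact absurd hV2 (not_lt.2 h)
    · exact absurd hV1 (not_lt.2 h)
  · -- (c)
    intro E hE
    obtain ⟨gE, hgE⟩ := hc E hE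
    choose k hk using hgE
    refine ⟨k, fun α => if h : α ∈ E then gE ⟨α, h⟩ else 0, ?_⟩
    ext p
    simp only [mem_inter_iff, mem_empty_iff_false, iff_false, not_and, and_imp]
    rintro ⟨β, α, rfl⟩ hαE hpV
    obtain ⟨hV1, hV2⟩ := hpV
    simp only [mem_setOf_eq] at hαE
    simp only [dif_pos hαE] at hV2
    rcases hk β ⟨α, hαE⟩ with h | h
    · exact absurd hV2 (not_lt.2 h)
    · exact absurd hV1 (not_lt.2 h)
  · -- (d)
    intro _ F hF
    obtain ⟨g₀, hg₀⟩ := hb F hF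
    choose k hk using hg₀
    refine ⟨fun β => if h : β ∈ F then k β h else 0, g₀, ?_⟩
    ext p
    simp only [mem_inter_iff, mem_empty_iff_false, iff_false, not_and, and_imp]
    rintro ⟨β, α, rfl⟩ hβF hpV
    obtain ⟨hV1, hV2⟩ := hpV
    simp only [mem_setOf_eq] at hβF
    simp only [dif_pos hβF] at hV1
    rcases hk β hβF α with h | h
    · exact absurd hV2 (not_lt.2 h)
    · exact absurd hV1 (not_lt.2 h)
end

section
/- Let λ ≤ θ be infinite cardinals and let {f_β : β < θ} be a ≤⁺-unbounded family of functions from λ to ω. Set A = {(⟨β,m⟩,⟨α,n⟩) ∈ (θ×ω)×(λ×ω) : m ≤ f_β(α) and n ≤ f_β(α)}. Then for every g : θ → ω and f : λ → ω, A ∩ (V_g × U_f) ≠ ∅ (that is, (∞,∞) lies in the closure of A in F_θ × F_λ). -/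
open Cardinal Set

universe u

/-- Part (I) of the proof of Lemma 1.3: the canonical set built from a
`≤⁺`-unbounded family meets every basic neighborhood of `(∞,∞)`. -/
theorem statement1 {Θ Λ : Type u} [Infinite Θ] [Infinite Λ] (hle : #Λ ≤ #Θ)
    (f : Θ → Λ → ℕ)
    (ha : ¬ ∃ g : Λ → ℕ, ∀ β : Θ, LePlus (f β) g)
    (A : Set ((Θ × ℕ) × (Λ × ℕ)))
    (hA : A = {p | p.1.2 ≤ f p.1.1 p.2.1 ∧ p.2.2 ≤ f p.1.1 p.2.1}) :
    ∀ (g : Θ → ℕ) (h : Λ → ℕ), (A ∩ VU g h).Nonempty := by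
  intro g h
  by_contra hemp
  apply ha
  refine ⟨h, fun β => ⟨g β, fun α => ?_⟩⟩
  by_contra hc
  push_neg at hc
  exact hemp ⟨((β, f β α), (α, f β α)), by
    simp [hA, VU, hc.1, hc.2]⟩
end

section
/- Let λ ≤ θ be infinite cardinals and let {f_β : β < θ} be a family of functions from λ to ω such that for every G ⊆ θ with |G| < θ the family {f_β : β ∈ G} is ≤⁺-bounded. Set A = {(⟨β,m⟩,⟨α,n⟩) ∈ (θ×ω)×(λ×ω) : m ≤ f_β(α) and n ≤ f_β(α)}. Then for every B ⊆ A with |B| < θ there exist g : θ → ω and f : λ → ω with B ∩ (V_g × U_f) = ∅. -/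
open Cardinal Set

universe u

/-- Part (II) of the proof of Lemma 1.3: if every subfamily of size `< θ` is
`≤⁺`-bounded, then every subset of the canonical set of size `< θ` is missed
by some basic neighborhood of `(∞,∞)`. -/
theorem statement2 {Θ Λ : Type u} [Infinite Θ] [Infinite Λ] (hle : #Λ ≤ #Θ)
    (f : Θ → Λ → ℕ)
    (hb : ∀ G : Set Θ, #G < #Θ → ∃ g : Λ → ℕ, ∀ β ∈ G, LePlus (f β) g)
    (A : Set ((Θ × ℕ) × (Λ × ℕ)))
    (hA : A = {p | p.1.2 ≤ f p.1.1 p.2.1 ∧ p.2.2 ≤ f p.1.1 p.2.1}) :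
    ∀ B ⊆ A, #B < #Θ → ∃ (g : Θ → ℕ) (h : Λ → ℕ), B ∩ VU g h = ∅ := by
  classical
  intro B hBA hBθ
  set G : Set Θ := (fun p : (Θ × ℕ) × (Λ × ℕ) => p.1.1) '' B with hG
  have hGθ : #G < #Θ := lt_of_le_of_lt Cardinal.mk_image_le hBθ
  obtain ⟨h, hh⟩ := hb G hGθ
  choose k hk using fun β (hβ : β ∈ G) => hh β hβ
  refine ⟨fun β => if hβ : β ∈ G then k β hβ else 0, h, ?_⟩
  ext p
  simp only [mem_inter_iff, mem_empty_iff_false, iff_false, not_and]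
  intro hpB hpV
  have hpA := hBA hpB
  rw [hA] at hpA
  obtain ⟨h1, h2⟩ := hpA
  have hβG : p.1.1 ∈ G := ⟨p, hpB, rfl⟩
  obtain ⟨hg, hf⟩ := hpV
  simp only [dif_pos hβG] at hg
  rcases hk p.1.1 hβG p.2.1 with hc | hc <;> omega
end

section
/- Let λ ≤ θ be infinite cardinals. If there is a (θ,λ)-good set, then there is a (θ,λ)-good set A such that for every β < θ and α < λ the set H_{βα}(A) is finite and closed downward. -/
open Cardinal Set

universe u

/-- `H_{βα}(A) = {(m,n) : (⟨β,m⟩,⟨α,n⟩) ∈ A}`. -/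
def Hset {Θ Λ : Type u} (A : Set ((Θ × ℕ) × (Λ × ℕ))) (β : Θ) (α : Λ) :
    Set (ℕ × ℕ) :=
  {q | ((β, q.1), (α, q.2)) ∈ A}

/-- A set of pairs of naturals is closed downward. -/
def Cdw (H : Set (ℕ × ℕ)) : Prop :=
  ∀ m n m' n', (m, n) ∈ H → m' ≤ m → n' ≤ n → (m', n') ∈ H

/-- A subset of a good set which still satisfies clause (a) is good. -/
lemma isGood_of_subset {Θ Λ : Type u} {A A' : Set ((Θ × ℕ) × (Λ × ℕ))}
    (hA : IsGood A) (hsub : A' ⊆ A)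
    (ha : ∀ (g : Θ → ℕ) (f : Λ → ℕ), (A' ∩ VU g f).Nonempty) : IsGood A' := by
  obtain ⟨_, hb, hc, hd⟩ := hA
  refine ⟨ha, fun B hB hBlt => hb B (hB.trans hsub) hBlt, ?_, ?_⟩
  · intro E hE
    obtain ⟨g, f, hgf⟩ := hc E hE
    refine ⟨g, f, Set.eq_empty_of_subset_empty ?_⟩
    rw [← hgf]
    exact inter_subset_inter (inter_subset_inter_left _ hsub) Subset.rfl
  · intro hlam F hF
    obtain ⟨g, f, hgf⟩ := hd hlam F hF
    refine ⟨g, f, Set.eq_empty_of_subset_empty ?_⟩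
    rw [← hgf]
    exact inter_subset_inter (inter_subset_inter_left _ hsub) Subset.rfl

/-- Lemma 2.1: if there is a `(θ,λ)`-good set, then there is one all of whose
sets `H_{βα}` are finite and closed downward. -/
theorem statement4 {Θ Λ : Type u} [Infinite Θ] [Infinite Λ] (hle : #Λ ≤ #Θ)
    (h : ∃ A : Set ((Θ × ℕ) × (Λ × ℕ)), IsGood A) :
    ∃ A : Set ((Θ × ℕ) × (Λ × ℕ)), IsGood A ∧
      ∀ (β : Θ) (α : Λ), (Hset A β α).Finite ∧ Cdw (Hset A β α) := by
  obtain ⟨A, hA⟩ := h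
  obtain ⟨ha, hb, hc, hd⟩ := hA
  -- Step 1: for each α, bound `H_{βα}` by an L-shape via clause (c).
  have h1 : ∀ α : Λ, ∃ (g : Θ → ℕ) (f : Λ → ℕ),
      A ∩ {p | p.2.1 ∈ ({α} : Set Λ)} ∩ VU g f = ∅ := by
    intro α
    refine hc {α} ?_
    rw [Cardinal.mk_singleton]
    exact lt_of_lt_of_le Cardinal.one_lt_aleph0 (Cardinal.aleph0_le_mk Λ)
  choose g₁ f₁ hgf₁ using h1
  have H1 : ∀ p ∈ A, p.1.2 ≤ g₁ p.2.1 p.1.1 ∨ p.2.2 ≤ f₁ p.2.1 p.2.1 := by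
    intro p hp
    by_contra hcon
    push_neg at hcon
    have hmem : p ∈ A ∩ {q | q.2.1 ∈ ({p.2.1} : Set Λ)} ∩ VU (g₁ p.2.1) (f₁ p.2.1) :=
      ⟨⟨hp, rfl⟩, hcon.1, hcon.2⟩
    rw [hgf₁ p.2.1] at hmem
    exact hmem
  -- Step 2: shrink to `A₁`, whose first `ℕ`-coordinates are bounded.
  set A₁ : Set ((Θ × ℕ) × (Λ × ℕ)) :=
    A ∩ {p | p.1.2 ≤ g₁ p.2.1 p.1.1} with hA₁def
  have hA₁good : IsGood A₁ := by
    refine isGood_of_subset ⟨ha, hb, hc, hd⟩ inter_subset_left ?_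
    intro g f
    obtain ⟨p, hpA, hpV⟩ := ha g (fun α => max (f α) (f₁ α α))
    have hV : g p.1.1 < p.1.2 ∧ max (f p.2.1) (f₁ p.2.1 p.2.1) < p.2.2 := hpV
    rcases H1 p hpA with hcase | hcase
    · exact ⟨p, ⟨hpA, hcase⟩, hV.1, lt_of_le_of_lt (le_max_left _ _) hV.2⟩
    · exact absurd hcase (not_le.mpr (lt_of_le_of_lt (le_max_right _ _) hV.2))
  obtain ⟨ha₁, hb₁, hc₁, hd₁⟩ := hA₁good
  -- Step 3: for each β, bound the row of `A₁` at `β` by an L-shape.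
  have h3 : ∀ β : Θ, ∃ (g : Θ → ℕ) (f : Λ → ℕ),
      A₁ ∩ {p | p.1.1 = β} ∩ VU g f = ∅ := by
    intro β
    by_cases hcase : #Λ = #Θ
    · obtain ⟨g, f, hgf⟩ := hd₁ hcase {β} (by
        rw [Cardinal.mk_singleton]
        exact lt_of_lt_of_le Cardinal.one_lt_aleph0 (Cardinal.aleph0_le_mk Θ))
      refine ⟨g, f, ?_⟩
      have : A₁ ∩ {p | p.1.1 = β} = A₁ ∩ {p | p.1.1 ∈ ({β} : Set Θ)} := by
        ext p; simp [Set.mem_singleton_iff]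
      rw [this]
      exact hgf
    · have hlt : #Λ < #Θ := hle.lt_of_ne hcase
      set B : Set ((Θ × ℕ) × (Λ × ℕ)) := A₁ ∩ {p | p.1.1 = β} with hBdef
      have hcard : #B < #Θ := by
        have hinj : Function.Injective
            (fun x : ↥B => (x.1.2.1, Nat.pair x.1.1.2 x.1.2.2)) := by
          rintro ⟨p, hp⟩ ⟨q, hq⟩ hpq
          simp only [Prod.mk.injEq] at hpq
          obtain ⟨h21, hpair⟩ := hpq
          rw [Nat.pair_eq_pair] at hpair
          have hp1 : p.1.1 = β := hp.2
          have hq1 : q.1.1 = β := hq.2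
          have e1 : p.1 = q.1 := Prod.ext (hp1.trans hq1.symm) hpair.1
          have e2 : p.2 = q.2 := Prod.ext h21 hpair.2
          exact Subtype.ext (Prod.ext e1 e2)
        have h1 : #B ≤ #(Λ × ℕ) := Cardinal.mk_le_of_injective hinj
        have h2 : #(Λ × ℕ) = #Λ := by
          rw [Cardinal.mk_prod, Cardinal.mk_nat, Cardinal.lift_aleph0,
            Cardinal.lift_uzero, Cardinal.mul_aleph0_eq (Cardinal.aleph0_le_mk Λ)]
        exact lt_of_le_of_lt (h1.trans_eq h2) hlt
      exact hb₁ B inter_subset_left hcard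
  choose g₂ f₂ hgf₂ using h3
  have H2 : ∀ p ∈ A₁, p.1.2 ≤ g₂ p.1.1 p.1.1 ∨ p.2.2 ≤ f₂ p.1.1 p.2.1 := by
    intro p hp
    by_contra hcon
    push_neg at hcon
    have hmem : p ∈ A₁ ∩ {q | q.1.1 = p.1.1} ∩ VU (g₂ p.1.1) (f₂ p.1.1) :=
      ⟨⟨hp, rfl⟩, hcon.1, hcon.2⟩
    rw [hgf₂ p.1.1] at hmem
    exact hmem
  -- Step 4: shrink to `A₂`, with both `ℕ`-coordinates bounded.
  set A₂ : Set ((Θ × ℕ) × (Λ × ℕ)) :=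
    A₁ ∩ {p | p.2.2 ≤ f₂ p.1.1 p.2.1} with hA₂def
  have hA₂good : IsGood A₂ := by
    refine isGood_of_subset ⟨ha₁, hb₁, hc₁, hd₁⟩ inter_subset_left ?_
    intro g f
    obtain ⟨p, hpA, hpV⟩ := ha₁ (fun β => max (g β) (g₂ β β)) f
    have hV : max (g p.1.1) (g₂ p.1.1 p.1.1) < p.1.2 ∧ f p.2.1 < p.2.2 := hpV
    rcases H2 p hpA with hcase | hcase
    · exact absurd hcase (not_le.mpr (lt_of_le_of_lt (le_max_right _ _) hV.1))
    · exact ⟨p, ⟨hpA, hcase⟩, lt_of_le_of_lt (le_max_left _ _) hV.1, hV.2⟩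
  obtain ⟨ha₂, hb₂, hc₂, hd₂⟩ := hA₂good
  -- Step 5: take the downward closure `A₃` of `A₂`.
  set A₃ : Set ((Θ × ℕ) × (Λ × ℕ)) :=
    {p | ∃ m n, p.1.2 ≤ m ∧ p.2.2 ≤ n ∧ ((p.1.1, m), (p.2.1, n)) ∈ A₂}
    with hA₃def
  have hsub23 : A₂ ⊆ A₃ := by
    intro p hp
    exact ⟨p.1.2, p.2.2, le_rfl, le_rfl, hp⟩
  -- witness function for points of `A₃`
  have hw : ∀ p ∈ A₃, ∃ q, q ∈ A₂ ∧ q.1.1 = p.1.1 ∧ q.2.1 = p.2.1 ∧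
      p.1.2 ≤ q.1.2 ∧ p.2.2 ≤ q.2.2 := by
    rintro p ⟨m, n, hm, hn, hq⟩
    exact ⟨((p.1.1, m), (p.2.1, n)), hq, rfl, rfl, hm, hn⟩
  choose w hwA hw1 hw2 hwm hwn using hw
  have hwV : ∀ (p) (hp : p ∈ A₃) (g : Θ → ℕ) (f : Λ → ℕ),
      p ∈ VU g f → w p hp ∈ VU g f := by
    intro p hp g f hpV
    obtain ⟨h1', h2'⟩ := hpV
    constructor
    · rw [hw1 p hp]; exact lt_of_lt_of_le h1' (hwm p hp)
    · rw [hw2 p hp]; exact lt_of_lt_of_le h2' (hwn p hp)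
  have hA₃good : IsGood A₃ := by
    refine ⟨?_, ?_, ?_, ?_⟩
    · intro g f
      obtain ⟨p, hp, hpV⟩ := ha₂ g f
      exact ⟨p, hsub23 hp, hpV⟩
    · intro B hB hBcard
      set B' : Set ((Θ × ℕ) × (Λ × ℕ)) :=
        Set.range (fun x : ↥B => w x.1 (hB x.2)) with hB'def
      have hB'sub : B' ⊆ A₂ := by
        rintro _ ⟨x, rfl⟩
        exact hwA x.1 (hB x.2)
      have hB'card : #B' < #Θ :=
        lt_of_le_of_lt Cardinal.mk_range_le hBcard
      obtain ⟨g, f, hgf⟩ := hb₂ B' hB'sub hB'card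
      refine ⟨g, f, Set.eq_empty_iff_forall_notMem.mpr ?_⟩
      rintro p ⟨hpB, hpV⟩
      have : w p (hB hpB) ∈ B' ∩ VU g f :=
        ⟨⟨⟨p, hpB⟩, rfl⟩, hwV p (hB hpB) g f hpV⟩
      rw [hgf] at this
      exact this
    · intro E hE
      obtain ⟨g, f, hgf⟩ := hc₂ E hE
      refine ⟨g, f, Set.eq_empty_iff_forall_notMem.mpr ?_⟩
      rintro p ⟨⟨hp3, hpE⟩, hpV⟩
      have : w p hp3 ∈ A₂ ∩ {q | q.2.1 ∈ E} ∩ VU g f :=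
        ⟨⟨hwA p hp3, by rw [Set.mem_setOf_eq, hw2 p hp3]; exact hpE⟩,
          hwV p hp3 g f hpV⟩
      rw [hgf] at this
      exact this
    · intro hlam F hF
      obtain ⟨g, f, hgf⟩ := hd₂ hlam F hF
      refine ⟨g, f, Set.eq_empty_iff_forall_notMem.mpr ?_⟩
      rintro p ⟨⟨hp3, hpF⟩, hpV⟩
      have : w p hp3 ∈ A₂ ∩ {q | q.1.1 ∈ F} ∩ VU g f :=
        ⟨⟨hwA p hp3, by rw [Set.mem_setOf_eq, hw1 p hp3]; exact hpF⟩,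
          hwV p hp3 g f hpV⟩
      rw [hgf] at this
      exact this
  refine ⟨A₃, hA₃good, ?_⟩
  intro β α
  constructor
  · refine Set.Finite.subset ((Set.finite_Iic (g₁ α β)).prod
      (Set.finite_Iic (f₂ β α))) ?_
    rintro ⟨m, n⟩ ⟨M, N, hm, hn, hq⟩
    have hM : M ≤ g₁ α β := hq.1.2
    have hN : N ≤ f₂ β α := hq.2
    exact ⟨le_trans hm hM, le_trans hn hN⟩
  · intro m n m' n' hmn hm' hn'
    obtain ⟨M, N, hm, hn, hq⟩ := hmn
    exact ⟨M, N, le_trans hm' hm, le_trans hn' hn, hq⟩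
end

section
/- Let λ ≤ θ be infinite cardinals and suppose A ⊆ (θ×ω)×(λ×ω) is such that each H_{βα}(A) is finite and closed downward. Then A meets every set V_g × U_f (g : θ → ω, f : λ → ω) — i.e., A accumulates at (∞,∞) in F_θ × F_λ — if and only if for every f : λ → ω there exists β < θ such that for every m ∈ ω there exists α < λ with (⟨β,m⟩,⟨α,f(α)⟩) ∈ A. -/
open Cardinal Set

universe u

/-- Lemma 2.2: for a set `A` with all `H_{βα}` finite and closed downward,
`A` accumulates at `(∞,∞)` iff for every `f : λ → ω` there is `β < θ` such
that for every `m` there is `α < λ` with `(⟨β,m⟩,⟨α,f(α)⟩) ∈ A`. -/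
theorem statement5 {Θ Λ : Type u} [Infinite Θ] [Infinite Λ] (hle : #Λ ≤ #Θ)
    (A : Set ((Θ × ℕ) × (Λ × ℕ)))
    (hfin : ∀ (β : Θ) (α : Λ), (Hset A β α).Finite)
    (hcdw : ∀ (β : Θ) (α : Λ), Cdw (Hset A β α)) :
    (∀ (g : Θ → ℕ) (f : Λ → ℕ), (A ∩ VU g f).Nonempty) ↔
      ∀ f : Λ → ℕ, ∃ β : Θ, ∀ m : ℕ, ∃ α : Λ, ((β, m), (α, f α)) ∈ A := by
  constructor
  · intro hA f
    by_contra hnot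
    push_neg at hnot
    choose g hg using hnot
    obtain ⟨⟨⟨β, m⟩, ⟨α, n⟩⟩, hmem, hm, hn⟩ := hA g f
    exact hg β α (hcdw β α m n (g β) (f α) hmem hm.le hn.le)
  · intro h g f
    obtain ⟨β, hβ⟩ := h (fun α => f α + 1)
    obtain ⟨α, hα⟩ := hβ (g β + 1)
    exact ⟨((β, g β + 1), (α, f α + 1)), hα, Nat.lt_succ_self _, Nat.lt_succ_self _⟩
end

section
/- Let θ be a regular infinite cardinal and suppose there is a sequence ⟨f_ξ : ξ < θ⟩ of functions ω → ω that is ≤*-increasing (ξ < η implies f_ξ ≤* f_η and ¬(f_η ≤* f_ξ)) and ≤*-unbounded in ω^ω. Then there is a (θ,ω)-good set. -/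
open Cardinal Set

universe u

/-- `A` is a `(θ,ω)`-good set, where `θ = #Θ` (clauses (a)–(c)). -/
def IsGoodOmega {Θ : Type} (A : Set ((Θ × ℕ) × (ℕ × ℕ))) : Prop :=
  (∀ (g : Θ → ℕ) (f : ℕ → ℕ), (A ∩ VU g f).Nonempty) ∧
  (∀ B ⊆ A, #B < #Θ → ∃ (g : Θ → ℕ) (f : ℕ → ℕ), B ∩ VU g f = ∅) ∧
  (∀ E : Set ℕ, E.Finite →
    ∃ (g : Θ → ℕ) (f : ℕ → ℕ), A ∩ {p | p.2.1 ∈ E} ∩ VU g f = ∅)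

/-!
The good set is the graph `A = {((ξ, n), (n, f ξ n))}` of the scale, with the row index `n`
repeated in both factors. A neighborhood `V_g × U_h` misses `A` exactly when `h` eventually
dominates every `f ξ` with thresholds given by `g`. So (a) is the unboundedness of the scale; for
(b), a set `B` with `|B| < θ` only involves `< θ` indices, which regularity bounds by some `η`, and
then `f η` together with the finite exceptions to `f ξ ≤* f η` separates `B`; (c) holds because
finitely many rows are cut off by a constant `g`.
-/

theorem Order.exists_forall_lt_of_mk_lt_cof {α : Type*} [LinearOrder α] {s : Set α}
    (hs : #s < Order.cof α) : ∃ x, ∀ y ∈ s, y < x :=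
  not_isCofinal_iff.1 fun h => (Order.cof_le h).not_gt hs

theorem LeStar.exists_forall_lt_imp_le {u v : ℕ → ℕ} (h : LeStar u v) :
    ∃ N, ∀ n, N < n → u n ≤ v n := by
  obtain ⟨N, hN⟩ := h.bddAbove
  exact ⟨N, fun n hn => not_not.1 fun hle => (hN hle).not_gt hn⟩

theorem exists_threshold_of_leStar {Θ : Type*} (f : Θ → ℕ → ℕ) (h : ℕ → ℕ) :
    ∃ g : Θ → ℕ, ∀ ξ, LeStar (f ξ) h → ∀ n, g ξ < n → f ξ n ≤ h n := by
  have : ∀ ξ, ∃ N, LeStar (f ξ) h → ∀ n, N < n → f ξ n ≤ h n := fun ξ => by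
    by_cases hξ : LeStar (f ξ) h
    · obtain ⟨N, hN⟩ := hξ.exists_forall_lt_imp_le
      exact ⟨N, fun _ => hN⟩
    · exact ⟨0, fun h' => absurd h' hξ⟩
  choose g hg using this
  exact ⟨g, hg⟩

section GraphSet

variable {Θ : Type} {f : Θ → ℕ → ℕ}

def graphSet (f : Θ → ℕ → ℕ) : Set ((Θ × ℕ) × (ℕ × ℕ)) :=
  range fun q : Θ × ℕ => ((q.1, q.2), (q.2, f q.1 q.2))

theorem graphSet_inter_VU_nonempty (hunb : ¬ ∃ h : ℕ → ℕ, ∀ ξ, LeStar (f ξ) h)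
    (g : Θ → ℕ) (h : ℕ → ℕ) : (graphSet f ∩ VU g h).Nonempty := by
  obtain ⟨ξ, hξ⟩ := not_forall.1 (not_exists.1 hunb h)
  obtain ⟨n, hn, hgt⟩ := Set.Infinite.exists_gt hξ (g ξ)
  exact ⟨((ξ, n), (n, f ξ n)), ⟨(ξ, n), rfl⟩, hgt, not_le.1 hn⟩

theorem exists_inter_VU_eq_empty_of_leStar {B : Set ((Θ × ℕ) × (ℕ × ℕ))}
    (hB : B ⊆ graphSet f) (h : ℕ → ℕ) (hle : ∀ p ∈ B, LeStar (f p.1.1) h) :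
    ∃ g : Θ → ℕ, B ∩ VU g h = ∅ := by
  obtain ⟨g, hg⟩ := exists_threshold_of_leStar f h
  refine ⟨g, eq_empty_of_forall_notMem ?_⟩
  rintro p ⟨hpB, hgp, hhp⟩
  obtain ⟨⟨ξ, n⟩, rfl⟩ := hB hpB
  exact (hg ξ (hle _ hpB) n hgp).not_gt hhp

theorem exists_graphSet_inter_VU_eq_empty_of_bddAbove {E : Set ℕ} (hE : BddAbove E) :
    ∃ (g : Θ → ℕ) (h : ℕ → ℕ), graphSet f ∩ {p | p.2.1 ∈ E} ∩ VU g h = ∅ := by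
  obtain ⟨N, hN⟩ := hE
  refine ⟨fun _ => N, fun _ => 0, eq_empty_of_forall_notMem ?_⟩
  rintro _ ⟨⟨⟨⟨ξ, n⟩, rfl⟩, hnE⟩, hNn, -⟩
  exact (hN hnE).not_gt hNn

end GraphSet

/-- A `≤*`-increasing, `≤*`-unbounded `θ`-sequence in `ω^ω` (for `θ` regular)
yields a `(θ,ω)`-good set. -/
theorem statement8 (θ : Cardinal.{0}) (hreg : θ.IsRegular)
    (f : θ.ord.ToType → ℕ → ℕ)
    (hmono : ∀ ξ η : θ.ord.ToType, ξ < η →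
      LeStar (f ξ) (f η) ∧ ¬ LeStar (f η) (f ξ))
    (hunb : ¬ ∃ g : ℕ → ℕ, ∀ ξ : θ.ord.ToType, LeStar (f ξ) g) :
    ∃ A : Set ((θ.ord.ToType × ℕ) × (ℕ × ℕ)), IsGoodOmega A := by
  refine ⟨graphSet f, graphSet_inter_VU_nonempty hunb, fun B hBA hB => ?_,
    fun E hE => exists_graphSet_inter_VU_eq_empty_of_bddAbove hE.bddAbove⟩
  have hcof : #((fun p => p.1.1) '' B) < Order.cof θ.ord.ToType := by
    rw [Ordinal.cof_toType, hreg.cof_ord]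
    exact mk_image_le.trans_lt (by rwa [mk_toType, card_ord] at hB)
  obtain ⟨η, hη⟩ := Order.exists_forall_lt_of_mk_lt_cof hcof
  obtain ⟨g, hg⟩ := exists_inter_VU_eq_empty_of_leStar hBA (f η)
    fun p hp => (hmono _ _ (hη _ ⟨p, hp, rfl⟩)).1
  exact ⟨g, f η, hg⟩
end

section
/- Let θ be a regular uncountable cardinal. If there is a (θ,ω)-gap in (ω^ω, ≤*), then there is a (θ,ω)-good set. -/
open Cardinal Set

universe u

/-!
The good set consists of the points `((ξ, m), (n, m))` with `g_n(m) < f_ξ(m)`.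
If a neighbourhood `V_G × U_F` missed it, then `f_ξ(m) ≤ g_n(m)` whenever `G ξ, F n < m`,
so `h(m) = min {g_n(m) | F n < m}` would interpolate the gap. On the other hand, fewer than
`θ` points involve fewer than `θ` indices `ξ`, which by regularity lie below a single `η`,
and `f_η` separates them from every `g_n`. Finitely many indices `n` are handled by
`f_ξ ≤* g_n`.
-/

open Filter

theorem leStar_iff_eventually_atTop {f g : ℕ → ℕ} :
    LeStar f g ↔ ∀ᶠ m in atTop, f m ≤ g m := by
  rw [← Nat.cofinite_eq_atTop, eventually_cofinite]
  rfl

theorem exists_forall_lt_of_forall_eventually_atTop {ι : Type*} {p : ι → ℕ → Prop}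
    (h : ∀ i, ∀ᶠ m in atTop, p i m) : ∃ N : ι → ℕ, ∀ i m, N i < m → p i m := by
  choose N hN using fun i => eventually_atTop.1 (h i)
  exact ⟨N, fun i m hm => hN i m hm.le⟩

theorem Cardinal.IsRegular.exists_forall_lt_of_mk_lt {θ : Cardinal} (hreg : θ.IsRegular)
    (S : Set θ.ord.ToType) (hS : #S < θ) : ∃ η, ∀ ξ ∈ S, ξ < η := by
  refine not_isCofinal_iff.1 fun hcof => hS.not_ge ?_
  simpa [hreg.cof_ord] using Order.cof_le hcof

def gapSet {Θ : Type*} (fs : Θ → ℕ → ℕ) (gs : ℕ → ℕ → ℕ) : Set ((Θ × ℕ) × (ℕ × ℕ)) :=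
  {p | p.2.2 = p.1.2 ∧ gs p.2.1 p.1.2 < fs p.1.1 p.1.2}

section gapSet

variable {Θ : Type} {fs : Θ → ℕ → ℕ} {gs : ℕ → ℕ → ℕ}

theorem exists_interpolant_of_gapSet_inter_VU_eq_empty {G : Θ → ℕ} {F : ℕ → ℕ}
    (hempty : gapSet fs gs ∩ VU G F = ∅) :
    ∃ h : ℕ → ℕ, (∀ ξ, LeStar (fs ξ) h) ∧ ∀ n, LeStar h (gs n) := by
  have hsep : ∀ ξ n m, G ξ < m → F n < m → fs ξ m ≤ gs n m := fun ξ n m hG hF => by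
    by_contra hlt
    exact eq_empty_iff_forall_notMem.1 hempty ((ξ, m), (n, m))
      ⟨⟨rfl, not_le.1 hlt⟩, hG, hF⟩
  refine ⟨fun m => ⨅ n : {n // F n < m}, gs n m, fun ξ => ?_, fun n => ?_⟩
  · rw [leStar_iff_eventually_atTop]
    filter_upwards [eventually_gt_atTop (G ξ), eventually_gt_atTop (F 0)] with m hG hF
    have : Nonempty {n // F n < m} := ⟨⟨0, hF⟩⟩
    exact le_ciInf fun n => hsep ξ n m hG n.2
  · rw [leStar_iff_eventually_atTop]
    filter_upwards [eventually_gt_atTop (F n)] with m hm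
    exact ciInf_le' (fun n : {n // F n < m} => gs n m) ⟨n, hm⟩

theorem gapSet_inter_VU_nonempty
    (hgap : ¬ ∃ h : ℕ → ℕ, (∀ ξ, LeStar (fs ξ) h) ∧ ∀ n, LeStar h (gs n))
    (G : Θ → ℕ) (F : ℕ → ℕ) : (gapSet fs gs ∩ VU G F).Nonempty :=
  nonempty_iff_ne_empty.2 fun hempty =>
    hgap (exists_interpolant_of_gapSet_inter_VU_eq_empty hempty)

theorem exists_inter_VU_eq_empty_of_subset_gapSet [LT Θ]
    (hfg : ∀ ξ n, LeStar (fs ξ) (gs n)) (hmono : ∀ ξ η, ξ < η → LeStar (fs ξ) (fs η))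
    {B : Set ((Θ × ℕ) × (ℕ × ℕ))} (hB : B ⊆ gapSet fs gs) {η : Θ}
    (hη : ∀ p ∈ B, p.1.1 < η) : ∃ (G : Θ → ℕ) (F : ℕ → ℕ), B ∩ VU G F = ∅ := by
  have hbelow : ∀ ξ, ∀ᶠ m in atTop, ξ < η → fs ξ m ≤ fs η m := fun ξ =>
    eventually_imp_distrib_left.2 fun h => leStar_iff_eventually_atTop.1 (hmono ξ η h)
  obtain ⟨G, hG⟩ := exists_forall_lt_of_forall_eventually_atTop hbelow
  obtain ⟨F, hF⟩ := exists_forall_lt_of_forall_eventually_atTop fun n =>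
    leStar_iff_eventually_atTop.1 (hfg η n)
  refine ⟨G, F, eq_empty_of_forall_notMem ?_⟩
  rintro ⟨⟨ξ, m⟩, ⟨n, k⟩⟩ ⟨hpB, hGm, hFk⟩
  obtain ⟨hkm, hlt⟩ := hB hpB
  dsimp only at hkm hFk
  have hle : fs ξ m ≤ gs n m := (hG ξ m hGm (hη _ hpB)).trans (hF n m (hkm ▸ hFk))
  exact hle.not_gt hlt

theorem exists_gapSet_inter_VU_eq_empty_of_finite (hfg : ∀ ξ n, LeStar (fs ξ) (gs n))
    {E : Set ℕ} (hE : E.Finite) :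
    ∃ (G : Θ → ℕ) (F : ℕ → ℕ), gapSet fs gs ∩ {p | p.2.1 ∈ E} ∩ VU G F = ∅ := by
  obtain ⟨G, hG⟩ := exists_forall_lt_of_forall_eventually_atTop fun ξ =>
    (eventually_all_finite hE).2 fun n _ => leStar_iff_eventually_atTop.1 (hfg ξ n)
  refine ⟨G, 0, eq_empty_of_forall_notMem ?_⟩
  rintro ⟨⟨ξ, m⟩, ⟨n, k⟩⟩ ⟨⟨⟨-, hlt⟩, hnE⟩, hGm, -⟩
  exact (hG ξ m hGm n hnE).not_gt hlt

end gapSet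

theorem statement10_general (θ : Cardinal.{0}) (hreg : θ.IsRegular)
    (hgap : ∃ (f : θ.ord.ToType → ℕ → ℕ) (g : ℕ → ℕ → ℕ),
      (∀ ξ η : θ.ord.ToType, ξ < η →
        LeStar (f ξ) (f η) ∧ ¬ LeStar (f η) (f ξ)) ∧
      (∀ n : ℕ, LeStar (g (n + 1)) (g n) ∧ ¬ LeStar (g n) (g (n + 1))) ∧
      (∀ (ξ : θ.ord.ToType) (n : ℕ), LeStar (f ξ) (g n)) ∧
      ¬ ∃ h : ℕ → ℕ, (∀ ξ : θ.ord.ToType, LeStar (f ξ) h) ∧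
        ∀ n : ℕ, LeStar h (g n)) :
    ∃ A : Set ((θ.ord.ToType × ℕ) × (ℕ × ℕ)), IsGoodOmega A := by
  obtain ⟨f, g, hf, -, hfg, hgap⟩ := hgap
  refine ⟨gapSet f g, gapSet_inter_VU_nonempty hgap, fun B hB hcard => ?_,
    fun E hE => exists_gapSet_inter_VU_eq_empty_of_finite hfg hE⟩
  have hsmall : #((fun p => p.1.1) '' B) < θ :=
    mk_image_le.trans_lt (by simpa using hcard)
  obtain ⟨η, hη⟩ := hreg.exists_forall_lt_of_mk_lt _ hsmall
  exact exists_inter_VU_eq_empty_of_subset_gapSet hfg (fun ξ η h => (hf ξ η h).1) hB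
    fun p hp => hη _ (mem_image_of_mem _ hp)

/-- For regular uncountable `θ`, the existence of a `(θ,ω)`-gap in
`(ω^ω, ≤*)` implies the existence of a `(θ,ω)`-good set. -/
theorem statement10 (θ : Cardinal.{0}) (hreg : θ.IsRegular) (hunc : ℵ₀ < θ)
    (hgap : ∃ (f : θ.ord.ToType → ℕ → ℕ) (g : ℕ → ℕ → ℕ),
      (∀ ξ η : θ.ord.ToType, ξ < η →
        LeStar (f ξ) (f η) ∧ ¬ LeStar (f η) (f ξ)) ∧
      (∀ n : ℕ, LeStar (g (n + 1)) (g n) ∧ ¬ LeStar (g n) (g (n + 1))) ∧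
      (∀ (ξ : θ.ord.ToType) (n : ℕ), LeStar (f ξ) (g n)) ∧
      ¬ ∃ h : ℕ → ℕ, (∀ ξ : θ.ord.ToType, LeStar (f ξ) h) ∧
        ∀ n : ℕ, LeStar h (g n)) :
    ∃ A : Set ((θ.ord.ToType × ℕ) × (ℕ × ℕ)), IsGoodOmega A :=
  statement10_general θ hreg hgap
end

section
/- Let θ be an infinite cardinal and let A ⊆ (θ×ω)×(θ×ω) be such that each H_{βα}(A) is finite, closed downward, and symmetric (i.e., H_{βα}(A) = {(n,m) : (m,n) ∈ H_{αβ}(A)} for all α, β < θ), and such that A meets every V_g × U_f (g, f : θ → ω). Then for every f : θ → ω there exist β < θ and ordinals α_m < θ (m ∈ ω) such that for every m ∈ ω: either f(α_m) ≥ m and (⟨β,m⟩,⟨α_m,f(α_m)⟩) ∈ A, or f(α_m) < m and (⟨β,m⟩,⟨α_m,m⟩) ∈ A. -/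
open Cardinal Set

universe u

/-- The Claim in Theorem 4.1: if all `H_{βα}(A)` are finite, closed downward
and symmetric, and `A` accumulates at `(∞,∞)`, then for every `f : θ → ω`
there are `β < θ` and `⟨α_m : m ∈ ω⟩` such that for each `m`, either
`f(α_m) ≥ m` and `(⟨β,m⟩,⟨α_m,f(α_m)⟩) ∈ A`, or `f(α_m) < m` and
`(⟨β,m⟩,⟨α_m,m⟩) ∈ A`. -/
theorem statement13 {Θ : Type u} [Infinite Θ]
    (A : Set ((Θ × ℕ) × (Θ × ℕ)))
    (hfin : ∀ β α : Θ, (Hset A β α).Finite)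
    (hcdw : ∀ β α : Θ, Cdw (Hset A β α))
    (hsym : ∀ β α : Θ, Hset A β α = {q : ℕ × ℕ | (q.2, q.1) ∈ Hset A α β})
    (hcl : ∀ g f : Θ → ℕ, (A ∩ VU g f).Nonempty) :
    ∀ f : Θ → ℕ, ∃ (β : Θ) (a : ℕ → Θ), ∀ m : ℕ,
      (m ≤ f (a m) ∧ ((β, m), (a m, f (a m))) ∈ A) ∨
      (f (a m) < m ∧ ((β, m), (a m, m)) ∈ A) := by
  intro f
  by_contra h
  push_neg at h
  have key : ∀ β : Θ, ∃ mb : ℕ, ∀ α : Θ, ((β, mb), (α, max mb (f α))) ∉ A := by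
    intro β
    by_contra hk
    push_neg at hk
    choose a ha using hk
    obtain ⟨m, hm1, hm2⟩ := h β a
    rcases le_or_gt m (f (a m)) with hle | hlt
    · exact hm1 hle (by simpa [max_eq_right hle] using ha m)
    · exact hm2 hlt (by simpa [max_eq_left hlt.le] using ha m)
  choose g hg using key
  obtain ⟨⟨⟨β, k⟩, ⟨α, n⟩⟩, hpA, hk, hn⟩ := hcl (fun β => max (g β) (f β))
    (fun β => max (g β) (f β))
  simp only at hk hn
  have hmem : (k, n) ∈ Hset A β α := hpA
  rcases le_or_gt (g β) n with hnb | hnb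
  · exact hg β α (hcdw β α k n (g β) (max (g β) (f α)) hmem
      (le_trans (le_max_left _ _) hk.le)
      (max_le hnb (le_trans (le_max_right _ _) hn.le)))
  · have hga : g α < n := lt_of_le_of_lt (le_max_left _ _) hn
    have hgk : g β < k := lt_of_le_of_lt (le_max_left _ _) hk
    have h1 : (max (g α) (f β), g α) ∈ Hset A β α :=
      hcdw β α k n _ _ hmem
        (max_le (by omega) (le_trans (le_max_right _ _) hk.le)) hga.le
    rw [hsym β α] at h1
    exact hg α β h1
end

section
/- Let θ be an infinite cardinal. If there is a (θ,θ)-good set, then there is a (θ,θ)-good set A such that each H_{βα}(A) is finite, closed downward, and symmetric, i.e., H_{βα}(A) = {(n,m) : (m,n) ∈ H_{αβ}(A)} for all α, β < θ. -/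
/-!
Clauses (c) and (d) for the singletons `{α}` and `{β}` give functions `gc α, fc α` and
`gr β, fr β`; on the part `A₀` of a good set `A` where `m > gr β β` and `n > fc α α` they force
`m ≤ gc α β` and `n ≤ fr β α`, so every `H_{βα}(A₀)` is finite, and `A₀` is still good.
The union of `A₀` with its mirror image, closed downward in the `ℕ`-coordinates, is again good:
each clause only asks certain subsets to miss some `V_g × U_f`, which is an upper set in the
`ℕ`-coordinates, is carried to `V_f × U_g` by the swap, and shrinks when `g, f` are replaced by
pointwise maxima. Its sets `H_{βα}` are finite, closed downward and symmetric.
-/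

open Cardinal Set

universe u

/-- `A` is a `(θ,θ)`-good set, where `θ = #Θ` (clauses (a)–(d)). -/
def IsGoodSelf {Θ : Type u} (A : Set ((Θ × ℕ) × (Θ × ℕ))) : Prop :=
  (∀ g f : Θ → ℕ, (A ∩ VU g f).Nonempty) ∧
  (∀ B ⊆ A, #B < #Θ → ∃ g f : Θ → ℕ, B ∩ VU g f = ∅) ∧
  (∀ E : Set Θ, #E < #Θ → ∃ g f : Θ → ℕ, A ∩ {p | p.2.1 ∈ E} ∩ VU g f = ∅) ∧
  (∀ F : Set Θ, #F < #Θ → ∃ g f : Θ → ℕ, A ∩ {p | p.1.1 ∈ F} ∩ VU g f = ∅)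

section
variable {Θ Λ : Type u}

theorem VU_subset_VU {g g' : Θ → ℕ} {f f' : Λ → ℕ} (hg : g ≤ g') (hf : f ≤ f') :
    VU g' f' ⊆ VU g f :=
  fun _ hp => ⟨(hg _).trans_lt hp.1, (hf _).trans_lt hp.2⟩

theorem preimage_swap_VU (g : Θ → ℕ) (f : Λ → ℕ) : Prod.swap ⁻¹' VU g f = VU f g := by
  ext
  exact and_comm

/-- `(∞, ∞)` is not in the closure of `A`. -/
def Avoids (A : Set ((Θ × ℕ) × (Λ × ℕ))) : Prop :=
  ∃ (g : Θ → ℕ) (f : Λ → ℕ), A ∩ VU g f = ∅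

theorem Avoids.mono {A B : Set ((Θ × ℕ) × (Λ × ℕ))} (hBA : B ⊆ A) (hA : Avoids A) :
    Avoids B := by
  obtain ⟨g, f, h⟩ := hA
  exact ⟨g, f, subset_empty_iff.mp (h ▸ inter_subset_inter_left _ hBA)⟩

theorem Avoids.union {A B : Set ((Θ × ℕ) × (Λ × ℕ))} (hA : Avoids A) (hB : Avoids B) :
    Avoids (A ∪ B) := by
  obtain ⟨g, f, hgf⟩ := hA
  obtain ⟨g', f', hgf'⟩ := hB
  refine ⟨g ⊔ g', f ⊔ f', ?_⟩
  rw [union_inter_distrib_right, ← subset_empty_iff]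
  exact union_subset
    (hgf ▸ inter_subset_inter_right _ (VU_subset_VU le_sup_left le_sup_left))
    (hgf' ▸ inter_subset_inter_right _ (VU_subset_VU le_sup_right le_sup_right))

theorem Avoids.of_inter_VU {A : Set ((Θ × ℕ) × (Λ × ℕ))} {g₀ : Θ → ℕ} {f₀ : Λ → ℕ}
    (h : Avoids (A ∩ VU g₀ f₀)) : Avoids A := by
  obtain ⟨g, f, hgf⟩ := h
  refine ⟨g₀ ⊔ g, f₀ ⊔ f, subset_empty_iff.mp (hgf ▸ ?_)⟩
  rintro p ⟨hpA, hp⟩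
  exact ⟨⟨hpA, VU_subset_VU le_sup_left le_sup_left hp⟩,
    VU_subset_VU le_sup_right le_sup_right hp⟩

theorem Avoids.preimage_swap {A : Set ((Λ × ℕ) × (Θ × ℕ))} (h : Avoids A) :
    Avoids (Prod.swap ⁻¹' A) := by
  obtain ⟨g, f, hgf⟩ := h
  exact ⟨f, g, by rw [← preimage_swap_VU, ← preimage_inter, hgf, preimage_empty]⟩

theorem avoids_preimage_swap_iff {A : Set ((Λ × ℕ) × (Θ × ℕ))} :
    Avoids (Prod.swap ⁻¹' A) ↔ Avoids A :=
  ⟨fun h => h.preimage_swap, Avoids.preimage_swap⟩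

def downClosure (A : Set ((Θ × ℕ) × (Λ × ℕ))) : Set ((Θ × ℕ) × (Λ × ℕ)) :=
  {p | ∃ m n, p.1.2 ≤ m ∧ p.2.2 ≤ n ∧ ((p.1.1, m), (p.2.1, n)) ∈ A}

theorem subset_downClosure (A : Set ((Θ × ℕ) × (Λ × ℕ))) : A ⊆ downClosure A :=
  fun p hp => ⟨p.1.2, p.2.2, le_rfl, le_rfl, hp⟩

theorem downClosure_inter_subset (A : Set ((Θ × ℕ) × (Λ × ℕ))) (P : Θ → Λ → Prop) :
    downClosure A ∩ {p | P p.1.1 p.2.1} ⊆ downClosure (A ∩ {p | P p.1.1 p.2.1}) :=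
  fun _ ⟨⟨m, n, hm, hn, hA⟩, hP⟩ => ⟨m, n, hm, hn, hA, hP⟩

theorem preimage_swap_downClosure (A : Set ((Λ × ℕ) × (Θ × ℕ))) :
    Prod.swap ⁻¹' downClosure A = downClosure (Prod.swap ⁻¹' A) := by
  ext p
  exact ⟨fun ⟨m, n, hm, hn, h⟩ => ⟨n, m, hn, hm, h⟩, fun ⟨m, n, hm, hn, h⟩ => ⟨n, m, hn, hm, h⟩⟩

theorem Avoids.downClosure {A : Set ((Θ × ℕ) × (Λ × ℕ))} (h : Avoids A) :
    Avoids (downClosure A) := by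
  obtain ⟨g, f, hgf⟩ := h
  refine ⟨g, f, eq_empty_of_forall_notMem ?_⟩
  rintro p ⟨⟨m, n, hm, hn, hpA⟩, hp₁, hp₂⟩
  exact eq_empty_iff_forall_notMem.mp hgf _ ⟨hpA, hp₁.trans_le hm, hp₂.trans_le hn⟩

theorem exists_subset_mk_le_of_subset_downClosure {A B : Set ((Θ × ℕ) × (Λ × ℕ))}
    (hBA : B ⊆ downClosure A) : ∃ C ⊆ A, #C ≤ #B ∧ B ⊆ downClosure C := by
  choose m n hm hn hA using fun b : B => hBA b.2
  refine ⟨range fun b : B => ((b.1.1.1, m b), (b.1.2.1, n b)), ?_, mk_range_le, ?_⟩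
  · rintro _ ⟨b, rfl⟩
    exact hA b
  · intro b hb
    exact ⟨m ⟨b, hb⟩, n ⟨b, hb⟩, hm ⟨b, hb⟩, hn ⟨b, hb⟩, ⟨b, hb⟩, rfl⟩

theorem Hset_downClosure (A : Set ((Θ × ℕ) × (Λ × ℕ))) (β : Θ) (α : Λ) :
    Hset (downClosure A) β α = lowerClosure (Hset A β α) := by
  ext ⟨m, n⟩
  rw [SetLike.mem_coe, mem_lowerClosure]
  exact ⟨fun ⟨m', n', hm, hn, h⟩ => ⟨(m', n'), h, hm, hn⟩,
    fun ⟨(m', n'), h, hm, hn⟩ => ⟨m', n', hm, hn, h⟩⟩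

theorem exists_finite_Hset_inter_VU_of_avoids {A : Set ((Θ × ℕ) × (Λ × ℕ))}
    (hcol : ∀ α, Avoids (A ∩ {p | p.2.1 = α})) (hrow : ∀ β, Avoids (A ∩ {p | p.1.1 = β})) :
    ∃ (g : Θ → ℕ) (f : Λ → ℕ), ∀ β α, (Hset (A ∩ VU g f) β α).Finite := by
  choose gc fc hc using hcol
  choose gr fr hr using hrow
  refine ⟨fun β => gr β β, fun α => fc α α, fun β α =>
    ((finite_Iic (gc α β)).prod (finite_Iic (fr β α))).subset ?_⟩
  rintro ⟨m, n⟩ ⟨hA, hm, hn⟩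
  refine ⟨mem_Iic.mpr (not_lt.mp fun h => ?_), mem_Iic.mpr (not_lt.mp fun h => ?_)⟩
  · exact eq_empty_iff_forall_notMem.mp (hc α) _ ⟨⟨hA, rfl⟩, h, hn⟩
  · exact eq_empty_iff_forall_notMem.mp (hr β) _ ⟨⟨hA, rfl⟩, hm, h⟩

end

theorem IsLowerSet.cdw {H : Set (ℕ × ℕ)} (h : IsLowerSet H) : Cdw H :=
  fun _ _ _ _ hmn hm hn => h (show _ ≤ _ from ⟨hm, hn⟩) hmn

namespace IsGoodSelf
variable {Θ : Type u} {A A' : Set ((Θ × ℕ) × (Θ × ℕ))}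

theorem iff_avoids : IsGoodSelf A ↔ ¬ Avoids A ∧ (∀ B ⊆ A, #B < #Θ → Avoids B) ∧
    (∀ E : Set Θ, #E < #Θ → Avoids (A ∩ {p | p.2.1 ∈ E})) ∧
    (∀ F : Set Θ, #F < #Θ → Avoids (A ∩ {p | p.1.1 ∈ F})) := by
  simp only [IsGoodSelf, Avoids, nonempty_iff_ne_empty, not_exists]

theorem inter_VU (hA : IsGoodSelf A) (g₀ f₀ : Θ → ℕ) : IsGoodSelf (A ∩ VU g₀ f₀) := by
  obtain ⟨ha, hb, hc, hd⟩ := iff_avoids.mp hA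
  refine iff_avoids.mpr ⟨fun h => ha h.of_inter_VU, fun B hB => hb B (hB.trans inter_subset_left),
    fun E hE => (hc E hE).mono ?_, fun F hF => (hd F hF).mono ?_⟩ <;>
  exact inter_subset_inter_left _ inter_subset_left

theorem union (hA : IsGoodSelf A) (hA' : IsGoodSelf A') : IsGoodSelf (A ∪ A') := by
  obtain ⟨ha, hb, hc, hd⟩ := iff_avoids.mp hA
  obtain ⟨-, hb', hc', hd'⟩ := iff_avoids.mp hA'
  refine iff_avoids.mpr ⟨fun h => ha (h.mono subset_union_left), fun B hB hBc => ?_,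
    fun E hE => ?_, fun F hF => ?_⟩
  · have hsplit : B ⊆ (B ∩ A) ∪ (B ∩ A') := fun b hb => (hB hb).imp (⟨hb, ·⟩) (⟨hb, ·⟩)
    exact ((hb _ inter_subset_right ((mk_le_mk_of_subset inter_subset_left).trans_lt hBc)).union
      (hb' _ inter_subset_right ((mk_le_mk_of_subset inter_subset_left).trans_lt hBc))).mono hsplit
  · rw [union_inter_distrib_right]
    exact (hc E hE).union (hc' E hE)
  · rw [union_inter_distrib_right]
    exact (hd F hF).union (hd' F hF)

theorem preimage_swap (hA : IsGoodSelf A) : IsGoodSelf (Prod.swap ⁻¹' A) := by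
  obtain ⟨ha, hb, hc, hd⟩ := iff_avoids.mp hA
  refine iff_avoids.mpr ⟨fun h => ha (avoids_preimage_swap_iff.mp h), fun B hB hBc => ?_,
    fun E hE => (hd E hE).preimage_swap, fun F hF => (hc F hF).preimage_swap⟩
  exact avoids_preimage_swap_iff.mp
    (hb _ (fun p hp => hB hp) ((mk_preimage_of_injective _ _ Prod.swap_injective).trans_lt hBc))

theorem downClosure (hA : IsGoodSelf A) : IsGoodSelf (downClosure A) := by
  obtain ⟨ha, hb, hc, hd⟩ := iff_avoids.mp hA
  refine iff_avoids.mpr ⟨fun h => ha (h.mono (subset_downClosure A)), fun B hB hBc => ?_,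
    fun E hE => (hc E hE).downClosure.mono (downClosure_inter_subset A fun _ α => α ∈ E),
    fun F hF => (hd F hF).downClosure.mono (downClosure_inter_subset A fun β _ => β ∈ F)⟩
  obtain ⟨C, hCA, hCB, hBC⟩ := exists_subset_mk_le_of_subset_downClosure hB
  exact (hb C hCA (hCB.trans_lt hBc)).downClosure.mono hBC

theorem exists_finite_Hset_inter_VU [Infinite Θ] (hA : IsGoodSelf A) :
    ∃ g f : Θ → ℕ, ∀ β α, (Hset (A ∩ VU g f) β α).Finite := by
  obtain ⟨-, -, hc, hd⟩ := iff_avoids.mp hA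
  have hsingleton (x : Θ) : #({x} : Set Θ) < #Θ := by
    rw [mk_singleton]
    exact one_lt_aleph0.trans_le (aleph0_le_mk Θ)
  exact exists_finite_Hset_inter_VU_of_avoids (fun α => hc {α} (hsingleton α))
    (fun β => hd {β} (hsingleton β))

end IsGoodSelf

/-- If there is a `(θ,θ)`-good set, then there is one all of whose sets
`H_{βα}` are finite, closed downward, and symmetric. -/
theorem statement14 {Θ : Type u} [Infinite Θ]
    (h : ∃ A : Set ((Θ × ℕ) × (Θ × ℕ)), IsGoodSelf A) :
    ∃ A : Set ((Θ × ℕ) × (Θ × ℕ)), IsGoodSelf A ∧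
      ∀ β α : Θ, (Hset A β α).Finite ∧ Cdw (Hset A β α) ∧
        Hset A β α = {q : ℕ × ℕ | (q.2, q.1) ∈ Hset A α β} := by
  obtain ⟨A, hA⟩ := h
  obtain ⟨g, f, hfin⟩ := hA.exists_finite_Hset_inter_VU
  set A₀ := A ∩ VU g f
  have hA₀ : IsGoodSelf A₀ := hA.inter_VU g f
  set S := A₀ ∪ Prod.swap ⁻¹' A₀
  have hS : Prod.swap ⁻¹' S = S := by
    ext p
    exact or_comm
  have hsymm : Prod.swap ⁻¹' downClosure S = downClosure S := by
    rw [preimage_swap_downClosure, hS]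
  refine ⟨downClosure S, (hA₀.union hA₀.preimage_swap).downClosure, fun β α => ⟨?_, ?_, ?_⟩⟩
  · rw [Hset_downClosure]
    exact ((hfin β α).union ((hfin α β).preimage Prod.swap_injective.injOn)).lowerClosure
  · rw [Hset_downClosure]
    exact (lowerClosure _).lower.cdw
  · calc Hset (downClosure S) β α = Hset (Prod.swap ⁻¹' downClosure S) β α := by rw [hsymm]
      _ = _ := rfl
end
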